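/- Let Φ and Θ be finite-dimensional real inner product spaces. Let f : Φ × Θ → ℝ and g : Θ → ℝ be differentiable, with g* = inf_θ g(θ) attained, g satisfying the PL inequality with constant μ > 0 (‖∇g(θ)‖² ≥ (1/μ)(g(θ) - g*) for all θ), and θ ↦ f(φ, θ) L-Lipschitz for every φ (L > 0). Fix δ > 0, γ ≥ L √(3 μ / δ), and set F_γ(φ, θ) = f(φ, θ) + γ g(θ). Suppose F_γ has Lγ-Lipschitz gradient, F_γ is bounded below, 0 < β ≤ 1/Lγ, and the gradient-descent iterates z_{k+1} = z_k - β ∇F_γ(z_k) converge to a limit (φ*, θ*) that is a global minimizer of F_γ. Then (φ*, θ*) satisfies ∇F_γ(φ*, θ*) = 0, g(θ*) - g* ≤ δ, and f(φ*, θ*) ≤ f(φ, θ) for every (φ, θ) with g(θ) - g* ≤ g(θ*) - g*. -/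

import Mathlib

/-!
At a global minimizer `(φ*, θ*)` of `F_γ = f + γ g` the gradient vanishes. Stationarity in `θ`
gives `γ ∇g(θ*) = -∇_θ f(φ*, θ*)`, whose norm is at most `L` by the Lipschitz bound, so
`‖∇g(θ*)‖ ≤ L / γ`; the PL inequality turns this into `g(θ*) - g* ≤ μ L² / γ² ≤ δ / 3`. Finally,
comparing `F_γ(φ*, θ*)` with `F_γ(φ, θ)` for any `θ` with `g(θ) ≤ g(θ*)` gives
`f(φ*, θ*) ≤ f(φ, θ)`.
-/

open InnerProductSpace

theorem IsLocalMin.gradient_eq_zero {E : Type*} [NormedAddCommGroup E] [InnerProductSpace ℝ E]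
    [CompleteSpace E] {f : E → ℝ} {a : E} (h : IsLocalMin f a) : gradient f a = 0 := by
  rw [gradient, h.fderiv_eq_zero, map_zero]

theorem norm_gradient_eq_norm_fderiv {E : Type*} [NormedAddCommGroup E] [InnerProductSpace ℝ E]
    [CompleteSpace E] (f : E → ℝ) (a : E) : ‖gradient f a‖ = ‖fderiv ℝ f a‖ :=
  (toDual ℝ E).symm.norm_map _

theorem abs_mul_norm_fderiv_le_of_isLocalMin_add_mul {E : Type*} [NormedAddCommGroup E]
    [NormedSpace ℝ E] {h g : E → ℝ} {x : E} {γ L : ℝ} (hL : 0 ≤ L)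
    (hh : DifferentiableAt ℝ h x) (hg : DifferentiableAt ℝ g x)
    (hlip : ∀ y, ‖h y - h x‖ ≤ L * ‖y - x‖) (hmin : IsLocalMin (fun y => h y + γ * g y) x) :
    |γ| * ‖fderiv ℝ g x‖ ≤ L := by
  have hstat : fderiv ℝ h x + γ • fderiv ℝ g x = 0 := by
    rw [← fderiv_const_mul hg, ← fderiv_fun_add hh (hg.const_mul γ)]
    exact hmin.fderiv_eq_zero
  calc |γ| * ‖fderiv ℝ g x‖ = ‖fderiv ℝ h x‖ := by
        rw [← Real.norm_eq_abs, ← norm_smul, eq_neg_of_add_eq_zero_right hstat, norm_neg]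
    _ ≤ L := norm_fderiv_le_of_lip' ℝ hL (.of_forall hlip)

theorem sub_le_mul_sq_of_norm_gradient_le {E : Type*} [NormedAddCommGroup E]
    [InnerProductSpace ℝ E] [CompleteSpace E] {g : E → ℝ} {gstar μ ε : ℝ} {θ : E} (hμ : 0 < μ)
    (hPL : ‖gradient g θ‖ ^ 2 ≥ (1 / μ) * (g θ - gstar)) (hε : ‖gradient g θ‖ ≤ ε) :
    g θ - gstar ≤ μ * ε ^ 2 := by
  have hsq : ‖gradient g θ‖ ^ 2 ≤ ε ^ 2 := pow_le_pow_left₀ (norm_nonneg _) hε 2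
  rw [one_div, ← div_eq_inv_mul, ge_iff_le, div_le_iff₀ hμ] at hPL
  nlinarith

theorem mul_div_sq_le_of_mul_sqrt_le {μ L δ γ : ℝ} (hμ : 0 < μ) (hL : 0 < L) (hδ : 0 < δ)
    (hγ : L * √(3 * μ / δ) ≤ γ) : μ * (L / γ) ^ 2 ≤ δ / 3 := by
  have hγ0 : 0 < γ := lt_of_lt_of_le (by positivity) hγ
  have hγsq : L ^ 2 * (3 * μ / δ) ≤ γ ^ 2 := by
    simpa [mul_pow, Real.sq_sqrt (by positivity : (0 : ℝ) ≤ 3 * μ / δ)] using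
      pow_le_pow_left₀ (by positivity) hγ 2
  rw [div_pow, mul_div_assoc', div_le_div_iff₀ (by positivity) (by norm_num)]
  rw [mul_div_assoc', div_le_iff₀ hδ] at hγsq
  nlinarith

theorem blJust_limit_solves_approx_bilevel_general
    {Φ Θ : Type*} [NormedAddCommGroup Φ] [InnerProductSpace ℝ Φ] [FiniteDimensional ℝ Φ]
    [NormedAddCommGroup Θ] [InnerProductSpace ℝ Θ] [FiniteDimensional ℝ Θ]
    (f : Φ × Θ → ℝ) (g : Θ → ℝ)
    (hf : Differentiable ℝ f) (hg : Differentiable ℝ g)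
    (gstar : ℝ)
    (μ : ℝ) (hμ : 0 < μ)
    (hPL : ∀ θ : Θ, ‖gradient g θ‖ ^ 2 ≥ (1 / μ) * (g θ - gstar))
    (L : ℝ) (hL : 0 < L)
    (hfLip : ∀ (φ : Φ) (θ₁ θ₂ : Θ), |f (φ, θ₁) - f (φ, θ₂)| ≤ L * ‖θ₁ - θ₂‖)
    (δ : ℝ) (hδ : 0 < δ)
    (γ : ℝ) (hγ : γ ≥ L * Real.sqrt (3 * μ / δ))
    (Fγ : WithLp 2 (Φ × Θ) → ℝ)
    (hFγ : ∀ w : WithLp 2 (Φ × Θ), Fγ w = f (w.ofLp.1, w.ofLp.2) + γ * g w.ofLp.2)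
    (zstar : WithLp 2 (Φ × Θ))
    (hmin : ∀ w : WithLp 2 (Φ × Θ), Fγ zstar ≤ Fγ w) :
    gradient Fγ zstar = 0 ∧
      g zstar.ofLp.2 - gstar ≤ δ ∧
      ∀ (φ : Φ) (θ : Θ), g θ - gstar ≤ g zstar.ofLp.2 - gstar →
        f (zstar.ofLp.1, zstar.ofLp.2) ≤ f (φ, θ) := by
  obtain ⟨φs, θs⟩ := zstar
  have hγ0 : 0 < γ := lt_of_lt_of_le (by positivity) hγ
  have hmin' (φ : Φ) (θ : Θ) : f (φs, θs) + γ * g θs ≤ f (φ, θ) + γ * g θ := by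
    simpa [hFγ] using hmin (WithLp.toLp 2 (φ, θ))
  refine ⟨IsLocalMin.gradient_eq_zero (.of_forall hmin), ?_, fun φ θ hθ => ?_⟩
  · have hslice : IsLocalMin (fun θ => f (φs, θ) + γ * g θ) θs := .of_forall (hmin' φs)
    have hbound := abs_mul_norm_fderiv_le_of_isLocalMin_add_mul hL.le
      (hf.comp (differentiable_const φs |>.prodMk differentiable_id)).differentiableAt
      (hg θs) (fun θ => hfLip φs θ θs) hslice
    have hgrad : ‖gradient g θs‖ ≤ L / γ := by
      rw [norm_gradient_eq_norm_fderiv, le_div_iff₀ hγ0, mul_comm, ← abs_of_pos hγ0]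
      exact hbound
    linarith [sub_le_mul_sq_of_norm_gradient_le hμ (hPL θs) hgrad,
      mul_div_sq_le_of_mul_sqrt_le hμ hL hδ hγ]
  · nlinarith [hmin' φ θ]

/-- **Theorem 1(ii) combined with Lemma 1**: a convergent BL-JUST run (gradient
descent on the penalized objective `F_γ = f + γ g` over the ℓ²-product space
`Φ ×₂ Θ`) whose limit `(φ*, θ*)` globally minimizes `F_γ` yields a stationary point
of `F_γ` that solves the approximate bilevel problem with accuracy `δ`:
`∇F_γ(φ*, θ*) = 0`, `g(θ*) - g* ≤ δ`, and `f(φ*, θ*) ≤ f(φ, θ)` for every `(φ, θ)`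
with `g(θ) - g* ≤ g(θ*) - g*`. -/
theorem blJust_limit_solves_approx_bilevel
    {Φ Θ : Type*} [NormedAddCommGroup Φ] [InnerProductSpace ℝ Φ] [FiniteDimensional ℝ Φ]
    [NormedAddCommGroup Θ] [InnerProductSpace ℝ Θ] [FiniteDimensional ℝ Θ]
    (f : Φ × Θ → ℝ) (g : Θ → ℝ)
    (hf : Differentiable ℝ f) (hg : Differentiable ℝ g)
    (gstar : ℝ) (hglb : IsGLB (Set.range g) gstar) (hatt : ∃ θ₀ : Θ, g θ₀ = gstar)
    (μ : ℝ) (hμ : 0 < μ)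
    (hPL : ∀ θ : Θ, ‖gradient g θ‖ ^ 2 ≥ (1 / μ) * (g θ - gstar))
    (L : ℝ) (hL : 0 < L)
    (hfLip : ∀ (φ : Φ) (θ₁ θ₂ : Θ), |f (φ, θ₁) - f (φ, θ₂)| ≤ L * ‖θ₁ - θ₂‖)
    (δ : ℝ) (hδ : 0 < δ)
    (γ : ℝ) (hγ : γ ≥ L * Real.sqrt (3 * μ / δ))
    (Fγ : WithLp 2 (Φ × Θ) → ℝ)
    (hFγ : ∀ w : WithLp 2 (Φ × Θ), Fγ w = f (w.ofLp.1, w.ofLp.2) + γ * g w.ofLp.2)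
    (Lγ : ℝ) (hLγ : 0 < Lγ)
    (hLip : ∀ w v : WithLp 2 (Φ × Θ), ‖gradient Fγ w - gradient Fγ v‖ ≤ Lγ * ‖w - v‖)
    (C : ℝ) (hC : ∀ w : WithLp 2 (Φ × Θ), C ≤ Fγ w)
    (β : ℝ) (hβ0 : 0 < β) (hβ : β ≤ 1 / Lγ)
    (z : ℕ → WithLp 2 (Φ × Θ))
    (hz : ∀ k : ℕ, z (k + 1) = z k - β • gradient Fγ (z k))
    (zstar : WithLp 2 (Φ × Θ))
    (hconv : Filter.Tendsto z Filter.atTop (nhds zstar))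
    (hmin : ∀ w : WithLp 2 (Φ × Θ), Fγ zstar ≤ Fγ w) :
    gradient Fγ zstar = 0 ∧
      g zstar.ofLp.2 - gstar ≤ δ ∧
      ∀ (φ : Φ) (θ : Θ), g θ - gstar ≤ g zstar.ofLp.2 - gstar →
        f (zstar.ofLp.1, zstar.ofLp.2) ≤ f (φ, θ) :=
  blJust_limit_solves_approx_bilevel_general f g hf hg gstar μ hμ hPL L hL hfLip δ hδ γ hγ Fγ hFγ
    zstar hmin
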